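/- Let x, y ∈ ℂⁿ with x ≠ 0. There exists a Hermitian matrix Δ ∈ ℂ^{n×n} (Δ* = Δ) with Δx = y if and only if x*y is real (equivalently Im(y*x) = 0). Moreover, in that case the minimal spectral norm of such a Δ equals ‖y‖/‖x‖. -/

import Mathlib

/-!
A Hermitian `Δ` has `x* Δ x` real, which gives necessity, and `‖Δ x‖ ≤ ‖Δ‖ ‖x‖` gives the lower
bound `‖y‖ / ‖x‖` on the norm. Conversely, rescale `y` to `w` with `‖w‖ = ‖x‖`; `x* w` is still
real, so `x + w ⟂ x - w` and the Householder reflection in `(x - w)ᗮ` sends `x` to `w`. Being an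
involutive isometry it is self-adjoint of norm one, and its multiple by `‖y‖ / ‖x‖` attains the
bound.
-/

/-- The spectral (operator 2-) norm of a complex matrix. -/
noncomputable def specNorm {n : ℕ} (A : Matrix (Fin n) (Fin n) ℂ) : ℝ :=
  ‖Matrix.toEuclideanCLM (𝕜 := ℂ) A‖

/-- The Euclidean norm of a complex vector. -/
noncomputable def evNorm {n : ℕ} (v : Fin n → ℂ) : ℝ :=
  ‖(WithLp.equiv 2 (Fin n → ℂ)).symm v‖

open scoped InnerProductSpace
open RCLike Submodule Matrix

section InnerProductSpace

variable {𝕜 E : Type*} [RCLike 𝕜] [NormedAddCommGroup E] [InnerProductSpace 𝕜 E]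

namespace Submodule

theorem reflection_orthogonal_sub_apply {v w : E} (hnorm : ‖v‖ = ‖w‖) (him : im ⟪v, w⟫_𝕜 = 0) :
    reflection (𝕜 ∙ (v - w))ᗮ v = w := by
  set R : E ≃ₗᵢ[𝕜] E := reflection (𝕜 ∙ (v - w))ᗮ
  have hsub : R (v - w) = -(v - w) := reflection_orthogonalComplement_singleton_eq_neg (v - w)
  have hadd : R (v + w) = v + w := by
    apply reflection_mem_subspace_eq_self
    have hsymm : ⟪w, v⟫_𝕜 = ⟪v, w⟫_𝕜 := by rw [← inner_conj_symm, conj_eq_iff_im.mpr him]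
    rw [mem_orthogonal_singleton_iff_inner_left, inner_add_left, inner_sub_right, inner_sub_right,
      inner_self_eq_norm_sq_to_K, inner_self_eq_norm_sq_to_K, hnorm, hsymm]
    ring
  have : (2 : 𝕜) • R v = (2 : 𝕜) • w := calc
    (2 : 𝕜) • R v = R (v + w) + R (v - w) := by rw [map_add, map_sub, two_smul]; abel
    _ = (2 : 𝕜) • w := by rw [hadd, hsub, two_smul]; abel
  exact smul_right_injective E two_ne_zero this

theorem isSelfAdjoint_reflection [CompleteSpace E] (K : Submodule 𝕜 E)
    [K.HasOrthogonalProjection] : IsSelfAdjoint (K.reflection : E →L[𝕜] E) := by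
  refine LinearMap.IsSymmetric.isSelfAdjoint fun x y => ?_
  change ⟪K.reflection x, y⟫_𝕜 = ⟪x, K.reflection y⟫_𝕜
  rw [← K.reflection.inner_map_map x (K.reflection y), reflection_reflection]

end Submodule

theorem exists_isSelfAdjoint_apply_eq [CompleteSpace E] {x y : E} (hx : x ≠ 0)
    (hxy : im ⟪x, y⟫_𝕜 = 0) :
    ∃ T : E →L[𝕜] E, IsSelfAdjoint T ∧ T x = y ∧ ‖T‖ = ‖y‖ / ‖x‖ := by
  rcases eq_or_ne y 0 with rfl | hy
  · exact ⟨0, .zero _, by simp, by simp⟩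
  have : Nontrivial E := ⟨⟨x, 0, hx⟩⟩
  set ρ : ℝ := ‖y‖ / ‖x‖
  have hρ : 0 < ρ := div_pos (norm_pos_iff.mpr hy) (norm_pos_iff.mpr hx)
  set w : E := ((ρ⁻¹ : ℝ) : 𝕜) • y
  have hnorm : ‖x‖ = ‖w‖ := by
    rw [norm_smul, norm_ofReal, abs_of_pos (inv_pos.mpr hρ)]
    simp only [ρ]
    field_simp
  have him : im ⟪x, w⟫_𝕜 = 0 := by
    rw [inner_smul_right, im_ofReal_mul, hxy, mul_zero]
  refine ⟨(ρ : 𝕜) • ((𝕜 ∙ (x - w))ᗮ.reflection : E →L[𝕜] E), ?_, ?_, ?_⟩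
  · have hρ' : IsSelfAdjoint (ρ : 𝕜) := conj_ofReal ρ
    exact hρ'.smul (isSelfAdjoint_reflection _)
  · rw [_root_.smul_apply, LinearIsometryEquiv.coe_coe'',
      reflection_orthogonal_sub_apply hnorm him, smul_smul, ← ofReal_mul,
      mul_inv_cancel₀ hρ.ne', ofReal_one, one_smul]
  · rw [norm_smul, LinearIsometryEquiv.norm_toContinuousLinearMap, norm_ofReal, abs_of_pos hρ,
      mul_one]

end InnerProductSpace

section Matrices

variable {n : ℕ}

theorem evNorm_pos {v : Fin n → ℂ} (hv : v ≠ 0) : 0 < evNorm v := by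
  simpa [evNorm] using hv

theorem evNorm_mulVec_le (A : Matrix (Fin n) (Fin n) ℂ) (v : Fin n → ℂ) :
    evNorm (A *ᵥ v) ≤ specNorm A * evNorm v :=
  (toEuclideanCLM (𝕜 := ℂ) A).le_opNorm (WithLp.toLp 2 v)

theorem exists_hermitian_mulVec_eq {x : Fin n → ℂ} (y : Fin n → ℂ) (hx : x ≠ 0)
    (hxy : (star x ⬝ᵥ y).im = 0) :
    ∃ Δ : Matrix (Fin n) (Fin n) ℂ, Δᴴ = Δ ∧ Δ *ᵥ x = y ∧ specNorm Δ = evNorm y / evNorm x := by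
  obtain ⟨T, hT, hTx, hTnorm⟩ := exists_isSelfAdjoint_apply_eq (𝕜 := ℂ)
    (x := WithLp.toLp 2 x) (y := WithLp.toLp 2 y) (by simpa using hx)
    (by rwa [EuclideanSpace.inner_toLp_toLp, dotProduct_comm])
  refine ⟨(toEuclideanCLM (n := Fin n) (𝕜 := ℂ)).symm T, ?_, ?_, ?_⟩
  · have hstar := (toEuclideanCLM (n := Fin n) (𝕜 := ℂ)).symm.map_star' T
    rw [hT.star_eq] at hstar
    exact hstar.symm
  · apply WithLp.toLp_injective 2
    rw [← toEuclideanCLM_toLp, StarAlgEquiv.apply_symm_apply, hTx]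
  · simpa [specNorm, evNorm] using hTnorm

end Matrices

open Matrix in
/-- Hermitian mapping theorem: for `x ≠ 0` there is a Hermitian `Δ` with `Δx = y` iff
`x*y` is real, and in that case the minimal spectral norm of such `Δ` is `‖y‖/‖x‖`. -/
theorem hermitian_mapping {n : ℕ} (x y : Fin n → ℂ) (hx : x ≠ 0) :
    ((∃ Δ : Matrix (Fin n) (Fin n) ℂ, Δᴴ = Δ ∧ Δ.mulVec x = y) ↔ (star x ⬝ᵥ y).im = 0) ∧
    ((star x ⬝ᵥ y).im = 0 →
      IsLeast {r : ℝ | ∃ Δ : Matrix (Fin n) (Fin n) ℂ,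
          Δᴴ = Δ ∧ Δ.mulVec x = y ∧ specNorm Δ = r}
        (evNorm y / evNorm x)) := by
  refine ⟨⟨?_, fun hxy => ?_⟩, fun hxy => ⟨exists_hermitian_mulVec_eq y hx hxy, ?_⟩⟩
  · rintro ⟨Δ, hΔ, rfl⟩
    exact IsHermitian.im_star_dotProduct_mulVec_self hΔ x
  · obtain ⟨Δ, hΔ, hΔx, -⟩ := exists_hermitian_mulVec_eq y hx hxy
    exact ⟨Δ, hΔ, hΔx⟩
  · rintro r ⟨Δ, -, rfl, rfl⟩
    rw [div_le_iff₀ (evNorm_pos hx)]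
    exact evNorm_mulVec_le Δ x
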